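/- Let n ≥ 3, Â = I_n - E_{11} and B̂ = J_n in T_n. Then the distance between Â and B̂ in the orthogonality graph O(T_n) is at least 4; in particular, there is no path of length ≤ 3 between them. -/

import Mathlib

open Matrix

/-- The orthogonality graph of the algebra of upper triangular `n × n` matrices
over `F`: vertices are the nonzero singular (equivalently, two-sided zero
divisor) upper triangular matrices, with an edge between distinct `A`, `B` iff
`A * B = B * A = 0`. -/
def orthoGraph (F : Type*) [Field F] (n : ℕ) :
    SimpleGraph {A : Matrix (Fin n) (Fin n) F // A.BlockTriangular id ∧ A ≠ 0 ∧ A.det = 0} where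
  Adj X Y := X ≠ Y ∧ X.1 * Y.1 = 0 ∧ Y.1 * X.1 = 0
  symm := ⟨fun X Y h => ⟨h.1.symm, h.2.2, h.2.1⟩⟩
  loopless := ⟨fun X h => h.1 rfl⟩

/-!
A matrix orthogonal to `I - E₁₁` is killed by `I - E₁₁` on both sides, so it is a multiple
of `E₁₁`; a matrix orthogonal to the shift `Jₙ` has zero columns `1, …, n-1` and zero rows
`2, …, n`, so it is a multiple of `E₁ₙ`. Hence the two endpoints are distinct, non-adjacent
and have no common neighbour, and a path of length three would need `c E₁₁ · d E₁ₙ = cd E₁ₙ`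
to vanish.
-/

namespace SimpleGraph

variable {V : Type*} {G : SimpleGraph V} {u v : V}

theorem four_le_edist (hne : u ≠ v) (hadj : ¬G.Adj u v)
    (hcommon : ∀ w, G.Adj u w → ¬G.Adj w v)
    (hpath : ∀ w x, G.Adj u w → G.Adj x v → ¬G.Adj w x) : 4 ≤ G.edist u v := by
  by_contra! hlt
  obtain ⟨p, hp⟩ := exists_walk_of_edist_ne_top (ne_top_of_lt hlt)
  have hlen : p.length < 4 := by rw [← hp] at hlt; exact_mod_cast hlt
  rcases p with _ | ⟨h₁, _ | ⟨h₂, _ | ⟨h₃, _ | ⟨h₄, p⟩⟩⟩⟩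
  · exact hne rfl
  · exact hadj h₁
  · exact hcommon _ h₁ h₂
  · exact hpath _ _ h₁ h₃ h₂
  · simp only [Walk.length_cons] at hlen
    omega

end SimpleGraph

namespace Matrix

theorem eq_single_of_one_sub_single_mul_eq_zero {ι R : Type*} [Fintype ι] [DecidableEq ι]
    [Ring R] {M : Matrix ι ι R} (i : ι) (h₁ : M * (1 - single i i 1) = 0)
    (h₂ : (1 - single i i 1) * M = 0) : M = single i i (M i i) := by
  rw [Matrix.mul_sub, Matrix.mul_one, sub_eq_zero] at h₁
  rw [Matrix.sub_mul, Matrix.one_mul, sub_eq_zero] at h₂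
  calc M = single i i 1 * M * single i i 1 := by rw [← h₂, ← h₁]
    _ = single i i (M i i) := by rw [single_mul_mul_single, one_mul, mul_one]

/-- The nilpotent Jordan block `Jₙ`. -/
def upperShift (R : Type*) [Zero R] [One R] (n : ℕ) : Matrix (Fin n) (Fin n) R :=
  of fun i j => if (i : ℕ) + 1 = j then 1 else 0

variable {R : Type*} [Semiring R] {n : ℕ}

theorem mul_upperShift_apply_succ (M : Matrix (Fin n) (Fin n) R) (i j : Fin n)
    (hj : (j : ℕ) + 1 < n) : (M * upperShift R n) i ⟨j + 1, hj⟩ = M i j := by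
  rw [mul_apply, Finset.sum_eq_single j]
  · simp [upperShift]
  · intro k _ hk
    simp [upperShift, Fin.val_inj, hk]
  · simp

theorem upperShift_mul_apply (M : Matrix (Fin n) (Fin n) R) (i j : Fin n)
    (hi : (i : ℕ) + 1 < n) : (upperShift R n * M) i j = M ⟨i + 1, hi⟩ j := by
  rw [mul_apply, Finset.sum_eq_single ⟨i + 1, hi⟩]
  · simp [upperShift]
  · intro k _ hk
    have : (i : ℕ) + 1 ≠ k := fun h => hk (Fin.ext h.symm)
    simp [upperShift, this]
  · simp

theorem eq_single_of_upperShift_mul_eq_zero (hn : 0 < n) {M : Matrix (Fin n) (Fin n) R}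
    (h₁ : M * upperShift R n = 0) (h₂ : upperShift R n * M = 0) :
    M = single ⟨0, hn⟩ ⟨n - 1, by omega⟩ (M ⟨0, hn⟩ ⟨n - 1, by omega⟩) := by
  ext i j
  by_cases hij : i = ⟨0, hn⟩ ∧ j = ⟨n - 1, by omega⟩
  · obtain ⟨rfl, rfl⟩ := hij
    simp
  rw [single_apply_of_ne _ _ _ _ _ fun h => hij ⟨h.1.symm, h.2.symm⟩]
  by_cases hi : i = ⟨0, hn⟩
  · have hj : (j : ℕ) + 1 < n := by
      have : (j : ℕ) ≠ n - 1 := fun h => hij ⟨hi, Fin.ext h⟩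
      omega
    rw [← mul_upperShift_apply_succ M i j hj, h₁, zero_apply]
  · have hi' : 0 < (i : ℕ) := Nat.pos_of_ne_zero fun h => hi (Fin.ext h)
    have := upperShift_mul_apply M ⟨i - 1, by omega⟩ j (by dsimp only; omega)
    simp only [Nat.sub_add_cancel hi', h₂, zero_apply] at this
    exact this.symm

end Matrix

section orthoGraph

variable {F : Type*} [Field F] {n : ℕ}
  {X Y Z : {A : Matrix (Fin n) (Fin n) F // A.BlockTriangular id ∧ A ≠ 0 ∧ A.det = 0}}

theorem exists_single_of_orthoGraph_adj_one_sub_single {i : Fin n} (hX : X.1 = 1 - single i i 1)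
    (h : (orthoGraph F n).Adj X Z) : ∃ c ≠ 0, Z.1 = single i i c := by
  obtain ⟨-, hXZ, hZX⟩ := h
  rw [hX] at hXZ hZX
  have hZ := eq_single_of_one_sub_single_mul_eq_zero i hZX hXZ
  refine ⟨Z.1 i i, fun h0 => Z.2.2.1 ?_, hZ⟩
  rw [hZ, h0, single_zero]

theorem exists_single_of_orthoGraph_adj_upperShift (hn : 0 < n) (hY : Y.1 = upperShift F n)
    (h : (orthoGraph F n).Adj Z Y) :
    ∃ c ≠ 0, Z.1 = single ⟨0, hn⟩ ⟨n - 1, by omega⟩ c := by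
  obtain ⟨-, hZY, hYZ⟩ := h
  rw [hY] at hZY hYZ
  have hZ := eq_single_of_upperShift_mul_eq_zero hn hZY hYZ
  refine ⟨_, fun h0 => Z.2.2.1 ?_, hZ⟩
  rw [hZ, h0, single_zero]

end orthoGraph

/-- For `n ≥ 3`, the distance in `O(Tₙ)` between `Â = I - E₁₁` and the nilpotent
Jordan block `B̂ = Jₙ` is at least `4`. -/
theorem stmt_11 {F : Type*} [Field F] {n : ℕ} (hn : 3 ≤ n)
    (X Y : {A : Matrix (Fin n) (Fin n) F // A.BlockTriangular id ∧ A ≠ 0 ∧ A.det = 0})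
    (hX : X.1 = 1 - single (⟨0, by omega⟩ : Fin n) (⟨0, by omega⟩ : Fin n) (1 : F))
    (hY : Y.1 = Matrix.of fun i j : Fin n => if (i : ℕ) + 1 = (j : ℕ) then (1 : F) else 0) :
    4 ≤ (orthoGraph F n).edist X Y := by
  change Y.1 = upperShift F n at hY
  have h0l : (⟨0, by omega⟩ : Fin n) ≠ ⟨n - 1, by omega⟩ :=
    Fin.ne_of_val_ne (show 0 ≠ n - 1 by omega)
  refine SimpleGraph.four_le_edist (fun h => ?_) (fun h => ?_) (fun Z h₁ h₂ => ?_)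
    (fun Z W h₁ h₂ h => ?_)
  · have := congrArg (fun A => A.1 ⟨1, by omega⟩ ⟨1, by omega⟩) h
    simp [hX, hY, upperShift] at this
  · obtain ⟨c, -, hc⟩ := exists_single_of_orthoGraph_adj_one_sub_single hX h
    have := congrFun (congrFun (hY.symm.trans hc) ⟨0, by omega⟩) ⟨1, by omega⟩
    simp [upperShift] at this
  · obtain ⟨c, hc, e₁⟩ := exists_single_of_orthoGraph_adj_one_sub_single hX h₁
    obtain ⟨d, -, e₂⟩ := exists_single_of_orthoGraph_adj_upperShift (by omega) hY h₂
    have := congrFun (congrFun (e₁.symm.trans e₂) ⟨0, by omega⟩) ⟨0, by omega⟩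
    rw [single_apply_same, single_apply_of_ne _ _ _ _ _ fun h => h0l h.2.symm] at this
    exact hc this
  · obtain ⟨c, hc, e₁⟩ := exists_single_of_orthoGraph_adj_one_sub_single hX h₁
    obtain ⟨d, hd, e₂⟩ := exists_single_of_orthoGraph_adj_upperShift (by omega) hY h₂
    have := congrFun (congrFun h.2.1 ⟨0, by omega⟩) ⟨n - 1, by omega⟩
    rw [e₁, e₂, single_mul_single_same, single_apply_same, Matrix.zero_apply] at this
    exact mul_ne_zero hc hd this
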